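/- With the recursively defined generators a₁,…,a_r (a₁ = (a_r, id)σ, a_i = (id, a_{i−1}) for 2 ≤ i ≤ s−1, a_s = (id, a_{s−1})σ, a_i = (a_{i−1}, id) for s+1 ≤ i ≤ r) and G the topological closure of the subgroup they generate in Ω, for every g ∈ G the diagonal element (g, g) belongs to G. -/

import Mathlib

namespace BinTree

/-- Vertices of the infinite rooted binary tree: finite words over `{0,1}`. -/
abbrev Vertex : Type := List Bool

/-- A function on vertices is a tree automorphism function if it preserves lengths
(levels) and prefixes. -/
def IsTreeAutFun (f : Vertex → Vertex) : Prop :=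
  (∀ v, (f v).length = v.length) ∧ ∀ v w : Vertex, (f (v ++ w)).take v.length = f v

/-- `Ω`: the automorphism group of the infinite rooted binary tree, realized as the
subgroup of permutations of the set of vertices preserving the tree structure. -/
def TreeAut : Subgroup (Equiv.Perm Vertex) where
  carrier := {e | IsTreeAutFun ⇑e}
  one_mem' := ⟨fun _ => rfl, fun v w => by
    simpa using List.take_left (l₁ := v) (l₂ := w)⟩
  mul_mem' := by
    rintro a b ha hb
    obtain ⟨ha1, ha2⟩ := ha
    obtain ⟨hb1, hb2⟩ := hb
    refine ⟨fun v => ?_, fun v w => ?_⟩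
    · simp [Equiv.Perm.mul_apply, ha1, hb1]
    · have hb' : b (v ++ w) = b v ++ (b (v ++ w)).drop v.length := by
        conv_lhs => rw [← List.take_append_drop v.length (b (v ++ w)), hb2]
      have hlen : (b v).length = v.length := hb1 v
      calc ((a * b) (v ++ w)).take v.length
          = (a (b v ++ (b (v ++ w)).drop v.length)).take v.length := by
            rw [Equiv.Perm.mul_apply, ← hb']
        _ = a (b v) := by rw [← hlen]; exact ha2 _ _
        _ = (a * b) v := rfl
  inv_mem' := by
    intro a ha
    obtain ⟨ha1, ha2⟩ := ha
    show IsTreeAutFun ⇑a⁻¹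
    have hlen : ∀ v : Vertex, (a⁻¹ v).length = v.length := by
      intro v
      have h := ha1 (a⁻¹ v)
      rw [show a (a⁻¹ v) = v from a.apply_symm_apply v] at h
      exact h.symm ▸ rfl
    refine ⟨hlen, fun v w => ?_⟩
    have htl : ((a⁻¹ (v ++ w)).take v.length).length = v.length := by
      rw [List.length_take, hlen, List.length_append]
      omega
    have key : a ((a⁻¹ (v ++ w)).take v.length) = v := by
      have h2 := ha2 ((a⁻¹ (v ++ w)).take v.length) ((a⁻¹ (v ++ w)).drop v.length)
      rw [List.take_append_drop, htl, show a (a⁻¹ (v ++ w)) = v ++ w from a.apply_symm_apply (v ++ w)] at h2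
      rw [← h2]
      simpa using List.take_left (l₁ := v) (l₂ := w)
    have h3 := congrArg (⇑a⁻¹) key
    rwa [show a⁻¹ (a ((a⁻¹ (v ++ w)).take v.length)) = (a⁻¹ (v ++ w)).take v.length from
      a.symm_apply_apply _] at h3

/-- wreath recursion, forward map: `(g,h)σᵗ` -/
def wrFun (g h : Vertex → Vertex) (t : Bool) : Vertex → Vertex
  | [] => []
  | x :: v => (xor x t) :: (cond x (h v) (g v))

/-- wreath recursion, inverse map -/
def wrFunInv (g h : Vertex → Vertex) (t : Bool) : Vertex → Vertex
  | [] => []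
  | y :: w => (xor y t) :: (cond (xor y t) (h w) (g w))

/-- `(g,h)σᵗ` as a permutation of the vertices. -/
def wrPerm (g h : Equiv.Perm Vertex) (t : Bool) : Equiv.Perm Vertex where
  toFun := wrFun ⇑g ⇑h t
  invFun := wrFunInv ⇑g.symm ⇑h.symm t
  left_inv := by
    intro v
    cases v with
    | nil => rfl
    | cons x v => cases x <;> cases t <;> simp [wrFun, wrFunInv]
  right_inv := by
    intro v
    cases v with
    | nil => rfl
    | cons x v => cases x <;> cases t <;> simp [wrFun, wrFunInv]

/-- The element `(g,h)σᵗ` of `Ω`: acts on the first level by `σᵗ` (where `σ` is the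
swap of the two level-one subtrees), with section `g` at the vertex `0` and section
`h` at the vertex `1`.  Thus `(γ₀,γ₁)τ` of the wreath recursion
`Ω ≃ (Ω × Ω) ⋊ S₂` is `wr γ₀ γ₁ t` (`t = true` iff `τ = σ`). -/
def wr (g h : TreeAut) (t : Bool) : TreeAut :=
  ⟨wrPerm g.1 h.1 t, by
    have hg : IsTreeAutFun ⇑g.1 := g.2
    have hh : IsTreeAutFun ⇑h.1 := h.2
    constructor
    · intro v
      cases v with
      | nil => rfl
      | cons x v =>
        cases x <;> simp [wrPerm, wrFun, hg.1, hh.1]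
    · intro v w
      cases v with
      | nil => simp [wrPerm, wrFun]
      | cons x v =>
        cases x <;> simp [wrPerm, wrFun, hg.2, hh.2]⟩

/-- Application of a tree automorphism to a vertex. -/
def ap (γ : TreeAut) (v : Vertex) : Vertex := γ.1 v

/-- The permutation induced by `γ ∈ Ω` on level `n` of the tree. -/
def levelPerm (n : ℕ) (γ : TreeAut) : Equiv.Perm (List.Vector Bool n) where
  toFun v := ⟨γ.1 v.1, by
    have h : IsTreeAutFun ⇑γ.1 := γ.2
    rw [h.1 v.1]; exact v.2⟩
  invFun v := ⟨γ.1.symm v.1, by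
    have h : IsTreeAutFun ⇑γ.1 := γ.2
    have h2 := h.1 (γ.1.symm v.1)
    rw [Equiv.apply_symm_apply] at h2
    exact h2.symm.trans v.2⟩
  left_inv v := Subtype.ext (Equiv.symm_apply_apply _ _)
  right_inv v := Subtype.ext (Equiv.apply_symm_apply _ _)

/-- Restriction to level `n` as a group homomorphism. -/
def levelHom (n : ℕ) : TreeAut →* Equiv.Perm (List.Vector Bool n) where
  toFun := levelPerm n
  map_one' := Equiv.ext fun v => Subtype.ext rfl
  map_mul' := fun g h => Equiv.ext fun v => Subtype.ext rfl

/-- `sgn_n`: the sign of the permutation induced on level `n`. -/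
def sgn (n : ℕ) (γ : TreeAut) : ℤˣ := Equiv.Perm.sign (levelPerm n γ)

/-- An odometer: acts as a single `2^n`-cycle on each level `n ≥ 1`. -/
def IsOdometer (γ : TreeAut) : Prop :=
  ∀ n : ℕ, 1 ≤ n → (levelPerm n γ).IsCycle ∧ (levelPerm n γ).support = Finset.univ

/-- The profinite topology on `Ω`: the coarsest topology making all level
restrictions (to the discrete finite groups) continuous. -/
instance : TopologicalSpace TreeAut :=
  ⨅ n : ℕ, TopologicalSpace.induced (levelPerm n) ⊥

/-- A vertex `w` is in a stable cycle of `γ` of length `k`: its `γ`-orbit has exactly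
`k` elements, and for every level `m` above the level of `w`, all level-`m` vertices
lying above this orbit are in one single `γ`-cycle (necessarily of length
`2^(m - n) * k`, which we record via the periodicity condition). -/
def InStableCycle (γ : TreeAut) (w : Vertex) (k : ℕ) : Prop :=
  0 < k ∧ ap (γ ^ k) w = w ∧ (∀ j : ℕ, 0 < j → j < k → ap (γ ^ j) w ≠ w) ∧
  (∀ u : Vertex, w.length < u.length → (∃ i : ℕ, u.take w.length = ap (γ ^ i) w) →
    (ap (γ ^ (2 ^ (u.length - w.length) * k)) u = u ∧
      ∀ u' : Vertex, u'.length = u.length →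
        (∃ i : ℕ, u'.take w.length = ap (γ ^ i) w) → ∃ j : ℕ, ap (γ ^ j) u = u'))

/-- Self-similar subgroup: closed under taking sections (here the section of `γ` at
the first-level vertex `x` is characterized by `(xv)γ = (x)γ ⬝ (v)γₓ`). -/
def SelfSimilar (H : Subgroup TreeAut) : Prop :=
  ∀ γ ∈ H, ∀ x : Bool, ∀ δ : TreeAut,
    (∀ v : Vertex, ap γ (x :: v) = ap γ [x] ++ ap δ v) → δ ∈ H

/-! The closure `G` is invariant under the continuous endomorphism `g ↦ (g, g)` of `Ω` as soon as
the generated subgroup is, and for that it suffices to write each `(aᵢ, aᵢ)` as a word in the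
generators. Since `a₁ = (a_r, 1)σ` conjugates `(1, g)` to `(g, 1)`, we get `(a_r, a_r) = a₁²`,
`(a_{s-1}, a_{s-1}) = a_s²`, `(aᵢ, aᵢ) = a_{i+1} · a₁ a_{i+1} a₁⁻¹` for `i ≤ s - 2` and
`(aᵢ, aᵢ) = a₁⁻¹ a_{i+1} a₁ · a_{i+1}` for `s ≤ i < r`. -/

lemma _root_.Set.MapsTo.closure_subgroupClosure {G : Type*} [Group G] [TopologicalSpace G]
    {f : G →* G} (hf : Continuous f) {S : Set G} (hS : ∀ x ∈ S, f x ∈ Subgroup.closure S) :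
    Set.MapsTo f (closure (Subgroup.closure S : Set G)) (closure (Subgroup.closure S : Set G)) := by
  have hmaps : Set.MapsTo f (Subgroup.closure S) (Subgroup.closure S) := fun _ hx =>
    (Subgroup.closure_le (Subgroup.comap f (Subgroup.closure S))).2 hS hx
  exact hmaps.closure hf

lemma wr_mul (A B C D : TreeAut) (t₁ t₂ : Bool) :
    wr A B t₁ * wr C D t₂ = wr (cond t₂ B A * C) (cond t₂ A B * D) (xor t₁ t₂) := by
  ext (_ | ⟨x, v⟩) <;> cases t₁ <;> cases t₂ <;> (try cases x) <;> rfl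

lemma wr_one : wr 1 1 false = 1 := by
  ext (_ | ⟨x, v⟩) <;> (try cases x) <;> rfl

lemma levelPerm_eq_iff {n : ℕ} {γ δ : TreeAut} :
    levelPerm n γ = levelPerm n δ ↔ ∀ v : Vertex, v.length = n → γ.1 v = δ.1 v :=
  ⟨fun h v hv => congrArg (fun e => (e ⟨v, hv⟩).1) h,
    fun h => Equiv.ext fun v => Subtype.ext (h v.1 v.2)⟩

lemma apply_eq_take_apply_append (γ : TreeAut) (v w : Vertex) :
    γ.1 v = (γ.1 (v ++ w)).take v.length :=
  (γ.2.2 v w).symm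

lemma levelPerm_wr_congr {n : ℕ} {g g' h h' : TreeAut} (t : Bool)
    (hg : levelPerm n g = levelPerm n g') (hh : levelPerm n h = levelPerm n h') :
    levelPerm n (wr g h t) = levelPerm n (wr g' h' t) := by
  rw [levelPerm_eq_iff] at *
  rintro (_ | ⟨x, v⟩) hv
  · rfl
  · have hv' : (v ++ [false]).length = n := by simp only [List.length_append] at hv ⊢; omega
    have hgv : g.1 v = g'.1 v := by
      rw [apply_eq_take_apply_append g v [false], apply_eq_take_apply_append g' v [false], hg _ hv']
    have hhv : h.1 v = h'.1 v := by
      rw [apply_eq_take_apply_append h v [false], apply_eq_take_apply_append h' v [false], hh _ hv']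
    show wrFun g.1 h.1 t (x :: v) = wrFun g'.1 h'.1 t (x :: v)
    simp only [wrFun, hgv, hhv]

lemma continuous_levelPerm (n : ℕ) :
    @Continuous _ _ _ ⊥ (levelPerm n) :=
  continuous_iInf_dom continuous_induced_dom

lemma continuous_of_levelPerm_factorsThrough {φ : TreeAut → TreeAut}
    (hφ : ∀ n, ∃ m, ∀ γ δ, levelPerm m γ = levelPerm m δ → levelPerm n (φ γ) = levelPerm n (φ δ)) :
    Continuous φ := by
  refine continuous_iInf_rng.2 fun n => continuous_induced_rng.2 ?_
  obtain ⟨m, hm⟩ := hφ n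
  let _ : TopologicalSpace (Equiv.Perm (List.Vector Bool n)) := ⊥
  let _ : TopologicalSpace (Equiv.Perm (List.Vector Bool m)) := ⊥
  have hfac : Function.FactorsThrough (levelPerm n ∘ φ) (levelPerm m) := hm
  rw [← hfac.extend_comp (e' := fun _ => 1)]
  exact continuous_bot.comp (continuous_levelPerm m)

def diagHom : TreeAut →* TreeAut where
  toFun g := wr g g false
  map_one' := wr_one
  map_mul' g h := by simp [wr_mul]

lemma diagHom_apply (g : TreeAut) : diagHom g = wr g g false := rfl

lemma continuous_diagHom : Continuous diagHom :=
  continuous_of_levelPerm_factorsThrough fun n =>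
    ⟨n, fun _ _ h => levelPerm_wr_congr false h h⟩

section Membership

variable {H : Subgroup TreeAut} {g k : TreeAut}

lemma diagHom_mem_of_wr_left_swap_mem (hg : wr g 1 true ∈ H) : diagHom g ∈ H := by
  have hsq : wr g 1 true * wr g 1 true = diagHom g := by simp [wr_mul, diagHom_apply]
  exact hsq ▸ H.mul_mem hg hg

lemma diagHom_mem_of_wr_right_swap_mem (hg : wr 1 g true ∈ H) : diagHom g ∈ H := by
  have hsq : wr 1 g true * wr 1 g true = diagHom g := by simp [wr_mul, diagHom_apply]
  exact hsq ▸ H.mul_mem hg hg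

lemma wr_swap_mul_wr_right (g k : TreeAut) :
    wr k 1 true * wr 1 g false = wr g 1 false * wr k 1 true := by
  simp [wr_mul]

lemma wr_right_mul_wr_left (g : TreeAut) : wr 1 g false * wr g 1 false = diagHom g := by
  simp [wr_mul, diagHom_apply]

lemma diagHom_mem_of_wr_right_mem (hk : wr k 1 true ∈ H) (hg : wr 1 g false ∈ H) :
    diagHom g ∈ H := by
  have hconj : wr k 1 true * wr 1 g false * (wr k 1 true)⁻¹ = wr g 1 false := by
    rw [wr_swap_mul_wr_right, mul_inv_cancel_right]
  rw [← wr_right_mul_wr_left, ← hconj]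
  exact H.mul_mem hg (H.mul_mem (H.mul_mem hk hg) (H.inv_mem hk))

lemma diagHom_mem_of_wr_left_mem (hk : wr k 1 true ∈ H) (hg : wr g 1 false ∈ H) :
    diagHom g ∈ H := by
  have hconj : (wr k 1 true)⁻¹ * wr g 1 false * wr k 1 true = wr 1 g false := by
    rw [mul_assoc, ← wr_swap_mul_wr_right, inv_mul_cancel_left]
  rw [← wr_right_mul_wr_left, ← hconj]
  exact H.mul_mem (H.mul_mem (H.mul_mem (H.inv_mem hk) hg) hk) hg

end Membership

lemma _root_.ZMod.exists_mem_Icc_natCast_eq (r : ℕ) [NeZero r] (z : ZMod r) :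
    ∃ i : ℕ, 1 ≤ i ∧ i ≤ r ∧ (i : ZMod r) = z := by
  by_cases hz : z = 0
  · exact ⟨r, Nat.one_le_iff_ne_zero.2 (NeZero.ne r), le_rfl, by simp [hz]⟩
  · exact ⟨z.val, Nat.one_le_iff_ne_zero.2 ((ZMod.val_ne_zero z).2 hz), (ZMod.val_lt z).le,
      ZMod.natCast_zmod_val z⟩

lemma diagHom_apply_mem_closure_range
    (r s : ℕ) [NeZero r] (a : ZMod r → TreeAut)
    (ha1 : a 1 = wr (a (r : ZMod r)) 1 true)
    (hmid : ∀ i : ℕ, 2 ≤ i → i ≤ s - 1 → a (i : ZMod r) = wr 1 (a ((i - 1 : ℕ) : ZMod r)) false)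
    (has : a (s : ZMod r) = wr 1 (a ((s - 1 : ℕ) : ZMod r)) true)
    (hhi : ∀ i : ℕ, s + 1 ≤ i → i ≤ r → a (i : ZMod r) = wr (a ((i - 1 : ℕ) : ZMod r)) 1 false)
    (z : ZMod r) :
    diagHom (a z) ∈ Subgroup.closure (Set.range a) := by
  have mem (i : ℕ) : a i ∈ Subgroup.closure (Set.range a) := Subgroup.subset_closure ⟨_, rfl⟩
  have ha1_mem : wr (a r) 1 true ∈ Subgroup.closure (Set.range a) :=
    ha1 ▸ Subgroup.subset_closure ⟨1, rfl⟩
  obtain ⟨i, hi1, hir, rfl⟩ := ZMod.exists_mem_Icc_natCast_eq r z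
  rcases eq_or_ne i r with rfl | hir'
  · exact diagHom_mem_of_wr_left_swap_mem ha1_mem
  rcases eq_or_ne i (s - 1) with rfl | his
  · exact diagHom_mem_of_wr_right_swap_mem (has ▸ mem s)
  rcases le_or_gt (i + 2) s with hlo | hhigh
  · refine diagHom_mem_of_wr_right_mem ha1_mem ?_
    simpa using hmid (i + 1) (by omega) (by omega) ▸ mem (i + 1)
  · refine diagHom_mem_of_wr_left_mem ha1_mem ?_
    simpa using hhi (i + 1) (by omega) (by omega) ▸ mem (i + 1)

theorem diag_mem_closure_general
    (r s : ℕ) (hr : 3 ≤ r)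
    (a : ZMod r → TreeAut)
    (ha1 : a 1 = wr (a (r : ZMod r)) 1 true)
    (hmid : ∀ i : ℕ, 2 ≤ i → i ≤ s - 1 → a (i : ZMod r) = wr 1 (a ((i - 1 : ℕ) : ZMod r)) false)
    (has : a (s : ZMod r) = wr 1 (a ((s - 1 : ℕ) : ZMod r)) true)
    (hhi : ∀ i : ℕ, s + 1 ≤ i → i ≤ r → a (i : ZMod r) = wr (a ((i - 1 : ℕ) : ZMod r)) 1 false)
    :
    ∀ γ ∈ closure ((Subgroup.closure (Set.range a) : Subgroup TreeAut) : Set TreeAut),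
      wr γ γ false ∈
        closure ((Subgroup.closure (Set.range a) : Subgroup TreeAut) : Set TreeAut) := by
  have : NeZero r := ⟨by omega⟩
  have hgen : ∀ x ∈ Set.range a, diagHom x ∈ Subgroup.closure (Set.range a) := by
    rintro _ ⟨z, rfl⟩
    exact diagHom_apply_mem_closure_range r s a ha1 hmid has hhi z
  exact fun γ hγ => Set.MapsTo.closure_subgroupClosure continuous_diagHom hgen hγ

/-- for every g in G = ⟨⟨a₁,…,a_r⟩⟩ (topological closure of the
generated subgroup), the diagonal (g,g) belongs to G. -/
theorem diag_mem_closure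
    (r s : ℕ) (hr : 3 ≤ r) (hs1 : 1 < s) (hsr : s ≤ r)
    (a : ZMod r → TreeAut)
    (ha1 : a 1 = wr (a (r : ZMod r)) 1 true)
    (hmid : ∀ i : ℕ, 2 ≤ i → i ≤ s - 1 → a (i : ZMod r) = wr 1 (a ((i - 1 : ℕ) : ZMod r)) false)
    (has : a (s : ZMod r) = wr 1 (a ((s - 1 : ℕ) : ZMod r)) true)
    (hhi : ∀ i : ℕ, s + 1 ≤ i → i ≤ r → a (i : ZMod r) = wr (a ((i - 1 : ℕ) : ZMod r)) 1 false)
    :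
    ∀ γ ∈ closure ((Subgroup.closure (Set.range a) : Subgroup TreeAut) : Set TreeAut),
      wr γ γ false ∈
        closure ((Subgroup.closure (Set.range a) : Subgroup TreeAut) : Set TreeAut) :=
  diag_mem_closure_general r s hr a ha1 hmid has hhi

end BinTree
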